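/- arXiv:quant-ph/0210077 — 2 statements merged into one kernel-verified Lean document; each statement's English description precedes it below -/
import Mathlib

section
/- (Completeness.) Let J be a self-adjoint positive semidefinite N×N complex matrix, Q an orthogonal projection N×N matrix, α ∈ ℂ^N a unit vector, and ε ≥ 0. Suppose J.mulVec α = 0 and ‖Q.mulVec (U_T ⋯ U_1 α)‖² ≤ ε. Define H = J ⊗ E_{0,0} + Q ⊗ E_{T,T} + H_prop, and let η = (1/√(T+1)) η_α be the normalized history vector. Then ⟪η, H.mulVec η⟫ ≤ ε; in particular, the smallest eigenvalue of the self-adjoint matrix H is at most ε. -/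
open Matrix Kronecker BigOperators

variable {N T : ℕ}

/-- `prodU U t = U_t ⋯ U_1` (with `U_k := U ⟨k-1⟩`); for `t = 0` it is the identity. -/
noncomputable def prodU (U : Fin T → Matrix (Fin N) (Fin N) ℂ) : ℕ → Matrix (Fin N) (Fin N) ℂ
  | 0 => 1
  | s + 1 => (if h : s < T then U ⟨s, h⟩ else 1) * prodU U s

/-- The matrix `E_{s,t}` with a single `1` in entry `(s,t)`. -/
noncomputable def Eij (s t : Fin (T + 1)) : Matrix (Fin (T + 1)) (Fin (T + 1)) ℂ :=
  Matrix.single s t 1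

/-- The `t`-th standard basis vector `e_t` of `ℂ^{T+1}`. -/
noncomputable def eVec (t : Fin (T + 1)) : Fin (T + 1) → ℂ := fun s => if s = t then 1 else 0

/-- Kronecker product of a vector in `ℂ^N` with a vector in `ℂ^{T+1}`. -/
noncomputable def vecKron (x : Fin N → ℂ) (y : Fin (T + 1) → ℂ) : Fin N × Fin (T + 1) → ℂ :=
  fun p => x p.1 * y p.2

/-- The history vector `η_α = ∑_{t=0}^T (U_t ⋯ U_1 α) ⊗ e_t`. -/
noncomputable def historyVec (U : Fin T → Matrix (Fin N) (Fin N) ℂ) (α : Fin N → ℂ) :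
    Fin N × Fin (T + 1) → ℂ :=
  ∑ t : Fin (T + 1), vecKron ((prodU U (t : ℕ)).mulVec α) (eVec t)

/-- The propagation Hamiltonian term `H_prop(t)` verifying the step from time `t-1`
to time `t` (here `t ∈ {1, …, T}` is encoded by `t : Fin T`, via `t.castSucc ↦ t.succ`). -/
noncomputable def HpropT (U : Fin T → Matrix (Fin N) (Fin N) ℂ) (t : Fin T) :
    Matrix (Fin N × Fin (T + 1)) (Fin N × Fin (T + 1)) ℂ :=
  (1 / 2 : ℂ) •
    ((1 : Matrix (Fin N) (Fin N) ℂ) ⊗ₖ (Eij t.succ t.succ + Eij t.castSucc t.castSucc)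
      - (U t) ⊗ₖ Eij t.succ t.castSucc - (U t)ᴴ ⊗ₖ Eij t.castSucc t.succ)

/-- The full propagation Hamiltonian `H_prop = ∑_{t=1}^T H_prop(t)`. -/
noncomputable def Hprop (U : Fin T → Matrix (Fin N) (Fin N) ℂ) :
    Matrix (Fin N × Fin (T + 1)) (Fin N × Fin (T + 1)) ℂ :=
  ∑ t : Fin T, HpropT U t
-- auxiliary lemmas
lemma mulVec_sumVec {k : ℕ} (A : Matrix (Fin N × Fin (T+1)) (Fin N × Fin (T+1)) ℂ)
    (f : Fin k → (Fin N × Fin (T+1)) → ℂ) :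
    A.mulVec (∑ t, f t) = ∑ t, A.mulVec (f t) := by
  ext i
  simp [Matrix.mulVec, dotProduct, Finset.mul_sum, Finset.sum_apply]
  rw [Finset.sum_comm]

lemma kron_mulVec_vecKron (A : Matrix (Fin N) (Fin N) ℂ) (B : Matrix (Fin (T+1)) (Fin (T+1)) ℂ)
    (x : Fin N → ℂ) (y : Fin (T+1) → ℂ) :
    (A ⊗ₖ B).mulVec (vecKron x y) = vecKron (A.mulVec x) (B.mulVec y) := by
  ext ⟨i, t⟩
  simp only [Matrix.mulVec, dotProduct, vecKron, Matrix.kroneckerMap_apply,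
    Fintype.sum_prod_type]
  rw [Finset.sum_mul_sum]
  exact Finset.sum_congr rfl fun j _ => Finset.sum_congr rfl fun s _ => by ring

lemma Eij_mulVec_eVec (s t r : Fin (T+1)) :
    (Eij s t).mulVec (eVec r) = if t = r then eVec s else 0 := by
  ext j
  simp [Eij, eVec, Matrix.mulVec, dotProduct, Matrix.single, Finset.sum_ite_eq]
  split_ifs <;> simp_all [eVec, eq_comm]

lemma vecKron_zero (x : Fin N → ℂ) : vecKron x (0 : Fin (T+1) → ℂ) = 0 := by
  ext p; simp [vecKron]

lemma kron_mulVec_history (U : Fin T → Matrix (Fin N) (Fin N) ℂ) (α : Fin N → ℂ)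
    (A : Matrix (Fin N) (Fin N) ℂ) (s t : Fin (T+1)) :
    (A ⊗ₖ Eij s t).mulVec (historyVec U α)
      = vecKron (A.mulVec ((prodU U (t : ℕ)).mulVec α)) (eVec s) := by
  unfold historyVec
  rw [mulVec_sumVec]
  have : ∀ r : Fin (T+1), (A ⊗ₖ Eij s t).mulVec (vecKron ((prodU U (r:ℕ)).mulVec α) (eVec r))
      = if t = r then vecKron (A.mulVec ((prodU U (r:ℕ)).mulVec α)) (eVec s) else 0 := by
    intro r
    rw [kron_mulVec_vecKron, Eij_mulVec_eVec]
    split_ifs with h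
    · rfl
    · exact vecKron_zero _
  simp only [this]
  simp [Finset.sum_ite_eq]

lemma star_vecKron_dot (x x' : Fin N → ℂ) (y y' : Fin (T+1) → ℂ) :
    star (vecKron x y) ⬝ᵥ vecKron x' y' = (star x ⬝ᵥ x') * (star y ⬝ᵥ y') := by
  simp only [dotProduct, vecKron, Pi.star_apply, Fintype.sum_prod_type]
  rw [Finset.sum_mul_sum]
  exact Finset.sum_congr rfl fun j _ => Finset.sum_congr rfl fun s _ => by
    simp [star_mul']; ring

lemma star_eVec_dot (r s : Fin (T+1)) :
    star (eVec (T := T) r) ⬝ᵥ eVec s = if r = s then 1 else 0 := by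
  simp [eVec, dotProduct, Finset.sum_ite_eq, apply_ite, eq_comm]

lemma sumVec_dot {k : ℕ} (f : Fin k → (Fin N × Fin (T+1)) → ℂ) (w : (Fin N × Fin (T+1)) → ℂ) :
    (∑ t, f t) ⬝ᵥ w = ∑ t, f t ⬝ᵥ w := by
  simp only [dotProduct, Finset.sum_apply, Finset.sum_mul]
  rw [Finset.sum_comm]

lemma star_history_dot_vecKron (U : Fin T → Matrix (Fin N) (Fin N) ℂ) (α : Fin N → ℂ)
    (z : Fin N → ℂ) (s : Fin (T+1)) :
    star (historyVec U α) ⬝ᵥ vecKron z (eVec s)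
      = star ((prodU U (s : ℕ)).mulVec α) ⬝ᵥ z := by
  unfold historyVec
  rw [star_sum, sumVec_dot]
  have : ∀ r : Fin (T+1),
      star (vecKron ((prodU U (r:ℕ)).mulVec α) (eVec r)) ⬝ᵥ vecKron z (eVec s)
      = if r = s then star ((prodU U (r:ℕ)).mulVec α) ⬝ᵥ z else 0 := by
    intro r
    rw [star_vecKron_dot, star_eVec_dot]
    split_ifs <;> simp
  simp only [this]
  simp [Finset.sum_ite_eq]

lemma prodU_succ' (U : Fin T → Matrix (Fin N) (Fin N) ℂ) (t : Fin T) :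
    prodU U ((t : ℕ) + 1) = U t * prodU U (t : ℕ) := by
  simp [prodU, t.isLt]

lemma sumM_mulVec {k : ℕ} (M : Fin k → Matrix (Fin N × Fin (T+1)) (Fin N × Fin (T+1)) ℂ)
    (v : (Fin N × Fin (T+1)) → ℂ) :
    (∑ t, M t).mulVec v = ∑ t, (M t).mulVec v := by
  ext i
  simp only [Matrix.mulVec, dotProduct, Finset.sum_apply, Matrix.sum_apply,
    Finset.sum_mul]
  rw [Finset.sum_comm]

lemma vecKron_zero' (y : Fin (T+1) → ℂ) : vecKron (0 : Fin N → ℂ) y = 0 := by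
  ext p; simp [vecKron]

lemma HpropT_mulVec_history (U : Fin T → Matrix (Fin N) (Fin N) ℂ)
    (hU : ∀ t, (U t)ᴴ * U t = 1 ∧ U t * (U t)ᴴ = 1) (α : Fin N → ℂ) (t : Fin T) :
    (HpropT U t).mulVec (historyVec U α) = 0 := by
  have h1 : (U t).mulVec ((prodU U (t : ℕ)).mulVec α) = (prodU U ((t : ℕ) + 1)).mulVec α := by
    rw [Matrix.mulVec_mulVec, prodU_succ']
  have h2 : (U t)ᴴ.mulVec ((prodU U ((t : ℕ) + 1)).mulVec α) = (prodU U (t : ℕ)).mulVec α := by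
    rw [prodU_succ', Matrix.mulVec_mulVec, ← mul_assoc, (hU t).1, one_mul]
  unfold HpropT
  rw [Matrix.smul_mulVec, Matrix.sub_mulVec, Matrix.sub_mulVec, Matrix.kronecker_add,
    Matrix.add_mulVec]
  rw [kron_mulVec_history, kron_mulVec_history, kron_mulVec_history, kron_mulVec_history]
  simp only [Fin.coe_castSucc, Fin.val_succ, Matrix.one_mulVec, h1, h2]
  rw [show ∀ a b : Fin N × Fin (T+1) → ℂ, a + b - a - b = 0 from fun a b => by abel]
  simp

lemma re_star_dot_self (w : Fin N → ℂ) : (star w ⬝ᵥ w).re = ∑ i, ‖w i‖ ^ 2 := by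
  simp only [dotProduct, Pi.star_apply]
  rw [Complex.re_sum]
  refine Finset.sum_congr rfl fun i _ => ?_
  rw [Complex.star_def, mul_comm, Complex.mul_conj, Complex.ofReal_re,
    Complex.normSq_eq_norm_sq]

lemma prodU_zero (U : Fin T → Matrix (Fin N) (Fin N) ℂ) : prodU U 0 = 1 := rfl

open scoped ComplexOrder

/-- Completeness: if `J` is positive semidefinite with `J α = 0` and the computation
accepts `α` except with probability `ε` (i.e. `‖Q (U_T ⋯ U_1 α)‖² ≤ ε`), then the
normalized history vector `η` witnesses `⟪η, H η⟫ ≤ ε` for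
`H = J ⊗ E_{0,0} + Q ⊗ E_{T,T} + H_prop`; in particular the smallest eigenvalue of `H`
is at most `ε`. -/
theorem stmt_11 {N T : ℕ} (hN : 1 ≤ N) (hT : 1 ≤ T)
    (U : Fin T → Matrix (Fin N) (Fin N) ℂ)
    (hU : ∀ t, (U t)ᴴ * U t = 1 ∧ U t * (U t)ᴴ = 1)
    (J Q : Matrix (Fin N) (Fin N) ℂ)
    (hJ : J.PosSemidef) (hQ : Qᴴ = Q ∧ Q * Q = Q)
    (α : Fin N → ℂ) (hα : ∑ i, ‖α i‖ ^ 2 = 1)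
    (ε : ℝ) (hε : 0 ≤ ε)
    (hJα : J.mulVec α = 0)
    (hacc : ∑ i, ‖Q.mulVec ((prodU U T).mulVec α) i‖ ^ 2 ≤ ε)
    (H : Matrix (Fin N × Fin (T + 1)) (Fin N × Fin (T + 1)) ℂ)
    (hH : H = J ⊗ₖ Eij 0 0 + Q ⊗ₖ Eij (Fin.last T) (Fin.last T) + Hprop U)
    (η : Fin N × Fin (T + 1) → ℂ)
    (hη : η = ((Real.sqrt ((T : ℝ) + 1))⁻¹ : ℝ) • historyVec U α) :
    (star η ⬝ᵥ H.mulVec η).re ≤ ε := by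
  subst hH hη
  set c : ℝ := (Real.sqrt ((T : ℝ) + 1))⁻¹ with hc
  set v := historyVec U α with hv
  set x := (prodU U T).mulVec α with hx
  have hHv : (J ⊗ₖ Eij 0 0 + Q ⊗ₖ Eij (Fin.last T) (Fin.last T) + Hprop U).mulVec v
      = vecKron (Q.mulVec x) (eVec (Fin.last T)) := by
    rw [Matrix.add_mulVec, Matrix.add_mulVec]
    rw [hv, kron_mulVec_history, kron_mulVec_history]
    unfold Hprop
    rw [sumM_mulVec]
    simp only [HpropT_mulVec_history U hU α, Finset.sum_const_zero, add_zero]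
    have h0 : ((0 : Fin (T+1)) : ℕ) = 0 := rfl
    rw [h0, Fin.val_last, prodU_zero, Matrix.one_mulVec, hJα, vecKron_zero', zero_add, ← hx]
  have hQQ : Qᴴ * Q = Q := by rw [hQ.1]; exact hQ.2
  have key : star v ⬝ᵥ (J ⊗ₖ Eij 0 0 + Q ⊗ₖ Eij (Fin.last T) (Fin.last T) + Hprop U).mulVec v
      = star (Q.mulVec x) ⬝ᵥ Q.mulVec x := by
    rw [hHv, hv, star_history_dot_vecKron, Fin.val_last, ← hx]
    conv_lhs => rw [← hQQ, ← Matrix.mulVec_mulVec, Matrix.dotProduct_mulVec,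
      ← Matrix.star_mulVec]
  rw [Matrix.mulVec_smul, dotProduct_smul, star_smul, star_trivial,
    smul_dotProduct, key, smul_smul]
  rw [Complex.real_smul, Complex.re_ofReal_mul]
  have hS : (star (Q.mulVec x) ⬝ᵥ Q.mulVec x).re = ∑ i, ‖Q.mulVec x i‖ ^ 2 :=
    re_star_dot_self _
  rw [hS]
  have hSnn : (0:ℝ) ≤ ∑ i, ‖Q.mulVec x i‖ ^ 2 :=
    Finset.sum_nonneg fun i _ => sq_nonneg _
  have hc0 : 0 ≤ c := by positivity
  have hsq : (1:ℝ) ≤ Real.sqrt ((T:ℝ) + 1) := by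
    rw [Real.one_le_sqrt]
    have : (0:ℝ) ≤ (T:ℝ) := Nat.cast_nonneg T
    linarith
  have hc1 : c ≤ 1 := by
    rw [hc]
    exact inv_le_one_of_one_le₀ hsq
  have hcc : c * c ≤ 1 := by nlinarith
  have hfin : c * c * (∑ i, ‖(Q *ᵥ x) i‖ ^ 2) ≤ ∑ i, ‖(Q *ᵥ x) i‖ ^ 2 :=
    mul_le_of_le_one_left hSnn hcc
  linarith
end

section
/- (Soundness.) Let J and Q be orthogonal projection N×N complex matrices and let 0 ≤ ε ≤ 1/100. Suppose that every unit vector v ∈ ℂ^N with J.mulVec v = 0 satisfies ‖(1_N − Q).mulVec (U_T ⋯ U_1 v)‖² ≤ ε. Define H = J ⊗ E_{0,0} + Q ⊗ E_{T,T} + H_prop. Then for every vector w indexed by Fin N × Fin (T+1), ⟪w, H.mulVec w⟫ ≥ (1/(16(T+1)³)) ‖w‖²; i.e. every eigenvalue of the self-adjoint matrix H is at least 1/(16(T+1)³). -/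
open Matrix Kronecker BigOperators

variable {N T : ℕ}

/-! ### Auxiliary machinery for the proof -/

section Aux

set_option maxHeartbeats 1000000 in
private lemma kitaev_key {E : Type*} [SeminormedAddCommGroup E]
    (T : ℕ) (hT : 1 ≤ T)
    (P R : E →+ E)
    (hPP : ∀ x, P (P x) = P x)
    (hRc : ∀ x, ‖R x‖ ≤ ‖x‖)
    (hrej : ∀ x, P x = 0 → (9/10 : ℝ) * ‖x‖ ≤ ‖R x‖)
    (v : Fin (T+1) → E) :
    (1 / (16 * ((T : ℝ) + 1) ^ 3)) * ∑ t, ‖v t‖^2 ≤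
      ‖P (v 0)‖^2 + ‖R (v (Fin.last T))‖^2
        + (1/2) * ∑ t : Fin T, ‖v t.succ - v t.castSucc‖^2 := by
  obtain ⟨Φ, hΦdef⟩ : ∃ Φ : ℝ, Φ = ‖P (v 0)‖^2 + ‖R (v (Fin.last T))‖^2
        + (1/2) * ∑ t : Fin T, ‖v t.succ - v t.castSucc‖^2 := ⟨_, rfl⟩
  obtain ⟨S, hSdef⟩ : ∃ S : ℝ, S = ∑ t : Fin (T+1), ‖v t‖^2 := ⟨_, rfl⟩
  rw [← hΦdef, ← hSdef]
  set L : ℝ := (T : ℝ) + 1 with hLdef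
  have hTr : (1:ℝ) ≤ (T:ℝ) := by exact_mod_cast hT
  have hL2 : (2:ℝ) ≤ L := by rw [hLdef]; linarith
  have hL0 : (0:ℝ) < L := by linarith
  have hsum0 : (0:ℝ) ≤ ∑ t : Fin T, ‖v t.succ - v t.castSucc‖^2 :=
    Finset.sum_nonneg fun _ _ => sq_nonneg _
  have hΦ0 : (0:ℝ) ≤ Φ := by rw [hΦdef]; positivity
  have hcomp1 : ‖P (v 0)‖^2 ≤ Φ := by rw [hΦdef]; nlinarith [sq_nonneg ‖R (v (Fin.last T))‖]
  have hcomp2 : ‖R (v (Fin.last T))‖^2 ≤ Φ := by rw [hΦdef]; nlinarith [sq_nonneg ‖P (v 0)‖]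
  have hcomp3 : ∀ t : Fin T, ‖v t.succ - v t.castSucc‖^2 ≤ 2 * Φ := by
    intro t
    have hterm : ‖v t.succ - v t.castSucc‖^2 ≤ ∑ x : Fin T, ‖v x.succ - v x.castSucc‖^2 :=
      Finset.single_le_sum (f := fun t : Fin T => ‖v t.succ - v t.castSucc‖^2)
        (fun i _ => sq_nonneg _) (Finset.mem_univ t)
    rw [hΦdef]
    nlinarith [sq_nonneg ‖P (v 0)‖, sq_nonneg ‖R (v (Fin.last T))‖]
  by_contra hcon
  push_neg at hcon
  have hS0 : (0:ℝ) < S := by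
    by_contra hS
    push_neg at hS
    have h0 : (1 / (16 * L ^ 3)) * S ≤ 0 :=
      mul_nonpos_of_nonneg_of_nonpos (by positivity) hS
    linarith
  obtain ⟨p, hpdef⟩ : ∃ p : ℝ, p = Real.sqrt Φ := ⟨_, rfl⟩
  have hp0 : 0 ≤ p := hpdef ▸ Real.sqrt_nonneg _
  have hp2 : p^2 = Φ := by rw [hpdef]; exact Real.sq_sqrt hΦ0
  have sqle : ∀ x c : ℝ, 0 ≤ x → 0 ≤ c → x^2 ≤ c^2 → x ≤ c := by
    intro x c hx hc h
    nlinarith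
  have h1 : ‖P (v 0)‖ ≤ p := sqle _ _ (norm_nonneg _) hp0 (by rw [hp2]; exact hcomp1)
  have h2 : ‖R (v (Fin.last T))‖ ≤ p := sqle _ _ (norm_nonneg _) hp0 (by rw [hp2]; exact hcomp2)
  have s2 : Real.sqrt 2 ^ 2 = 2 := Real.sq_sqrt (by norm_num)
  have s20 : 0 ≤ Real.sqrt 2 := Real.sqrt_nonneg 2
  have s2a : (1:ℝ) ≤ Real.sqrt 2 := by nlinarith
  have s2b : Real.sqrt 2 ≤ 3/2 := by nlinarith
  have h3 : ∀ t : Fin T, ‖v t.succ - v t.castSucc‖ ≤ Real.sqrt 2 * p := by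
    intro t
    refine sqle _ _ (norm_nonneg _) (by positivity) ?_
    rw [mul_pow, s2, hp2]
    exact hcomp3 t
  have h4 : ∀ n (hn : n ≤ T), ‖v ⟨n, Nat.lt_succ_of_le hn⟩ - v 0‖ ≤ n * (Real.sqrt 2 * p) := by
    intro n
    induction n with
    | zero =>
      intro hn
      rw [show (⟨0, Nat.lt_succ_of_le hn⟩ : Fin (T+1)) = 0 from Fin.mk_zero]
      simp
    | succ n ih =>
      intro hn
      have hn' : n < T := hn
      have hnT : n ≤ T := le_of_lt hn'
      have key := h3 ⟨n, hn'⟩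
      have e1 : (⟨n, hn'⟩ : Fin T).succ = (⟨n+1, Nat.lt_succ_of_le hn⟩ : Fin (T+1)) := rfl
      have e2 : (⟨n, hn'⟩ : Fin T).castSucc = (⟨n, Nat.lt_succ_of_le hnT⟩ : Fin (T+1)) := rfl
      rw [e1, e2] at key
      calc ‖v ⟨n+1, Nat.lt_succ_of_le hn⟩ - v 0‖
          ≤ ‖v ⟨n+1, Nat.lt_succ_of_le hn⟩ - v ⟨n, Nat.lt_succ_of_le hnT⟩‖
            + ‖v ⟨n, Nat.lt_succ_of_le hnT⟩ - v 0‖ := norm_sub_le_norm_sub_add_norm_sub _ _ _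
        _ ≤ Real.sqrt 2 * p + n * (Real.sqrt 2 * p) := add_le_add key (ih hnT)
        _ = (n+1 : ℕ) * (Real.sqrt 2 * p) := by push_cast; ring
  obtain ⟨t0, -, ht0⟩ : ∃ t ∈ Finset.univ, S / L ≤ ‖v t‖^2 := by
    apply Finset.exists_le_of_sum_le (Finset.univ_nonempty)
    have hc : ∑ _t : Fin (T+1), S / L = S := by
      rw [Finset.sum_const, Finset.card_univ, Fintype.card_fin, nsmul_eq_mul, hLdef]
      push_cast
      field_simp
    rw [hc, ← hSdef]
  obtain ⟨a, hadef⟩ : ∃ a : ℝ, a = Real.sqrt (S / L) := ⟨_, rfl⟩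
  have ha0 : 0 ≤ a := hadef ▸ Real.sqrt_nonneg _
  have ha2 : a^2 = S / L := by rw [hadef]; exact Real.sq_sqrt (le_of_lt (div_pos hS0 hL0))
  have ha : a ≤ ‖v t0‖ := sqle _ _ ha0 (norm_nonneg _) (by rw [ha2]; exact ht0)
  have ht0T : (t0 : ℕ) ≤ T := Nat.lt_succ_iff.mp t0.isLt
  have h4t0 : ‖v t0 - v 0‖ ≤ (T:ℝ) * (Real.sqrt 2 * p) := by
    have h := h4 (t0 : ℕ) ht0T
    have e : (⟨(t0:ℕ), Nat.lt_succ_of_le ht0T⟩ : Fin (T+1)) = t0 := by ext; rfl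
    rw [e] at h
    refine h.trans ?_
    have hc : ((t0:ℕ):ℝ) ≤ (T:ℝ) := by exact_mod_cast ht0T
    exact mul_le_mul_of_nonneg_right hc (by positivity)
  have hlastT : ‖v (Fin.last T) - v 0‖ ≤ (T:ℝ) * (Real.sqrt 2 * p) := by
    have h := h4 T le_rfl
    have e : (⟨T, Nat.lt_succ_of_le le_rfl⟩ : Fin (T+1)) = Fin.last T := rfl
    rwa [e] at h
  obtain ⟨u, hudef⟩ : ∃ u : E, u = v 0 - P (v 0) := ⟨_, rfl⟩
  have hPu : P u = 0 := by rw [hudef, map_sub, hPP]; abel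
  have hu1 : (9/10 : ℝ) * ‖u‖ ≤ ‖R u‖ := hrej u hPu
  have hu2 : ‖v 0‖ - p ≤ ‖u‖ := by
    have h := norm_sub_norm_le (v 0) (P (v 0))
    rw [← hudef] at h
    linarith
  have hv0 : a - (T:ℝ) * (Real.sqrt 2 * p) ≤ ‖v 0‖ := by
    have h := norm_sub_norm_le (v t0) (v 0)
    linarith
  have hRu : ‖R u‖ ≤ p + ((T:ℝ) * (Real.sqrt 2 * p) + p) := by
    have h5 : ‖R u‖ ≤ ‖R (v (Fin.last T))‖ + ‖R (v (Fin.last T) - u)‖ := by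
      have h : R u = R (v (Fin.last T)) - R (v (Fin.last T) - u) := by
        rw [map_sub]; abel
      rw [h]; exact norm_sub_le _ _
    have h6 : ‖R (v (Fin.last T) - u)‖ ≤ ‖v (Fin.last T) - u‖ := hRc _
    have h7 : ‖v (Fin.last T) - u‖ ≤ (T:ℝ) * (Real.sqrt 2 * p) + p := by
      have h : v (Fin.last T) - u = (v (Fin.last T) - v 0) + P (v 0) := by
        rw [hudef]; abel
      rw [h]
      calc ‖(v (Fin.last T) - v 0) + P (v 0)‖ ≤ ‖v (Fin.last T) - v 0‖ + ‖P (v 0)‖ :=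
            norm_add_le _ _
        _ ≤ (T:ℝ) * (Real.sqrt 2 * p) + p := add_le_add hlastT h1
    linarith
  have hp2' : p^2 < (1 / (16 * L ^ 3)) * S := by rw [hp2]; exact hcon
  have hchain : (9/10 : ℝ) * (a - (T:ℝ) * (Real.sqrt 2 * p) - p)
      ≤ 2 * p + (T:ℝ) * (Real.sqrt 2 * p) := by
    have hu3 : a - (T:ℝ) * (Real.sqrt 2 * p) - p ≤ ‖u‖ := by linarith
    nlinarith [norm_nonneg u]
  have haq : a ≤ p * (4 * L) := by
    have hs2T : Real.sqrt 2 * (T:ℝ) ≤ (3/2) * (T:ℝ) :=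
      mul_le_mul_of_nonneg_right s2b (by linarith)
    rw [hLdef]
    nlinarith
  have hsq : a^2 ≤ p^2 * (16 * L^2) := by nlinarith
  have hfin : (1 / (16 * L ^ 3)) * S * (16 * L^2) = S / L := by field_simp
  have haS : S / L < S / L := by
    calc S / L = a^2 := ha2.symm
      _ ≤ p^2 * (16 * L^2) := hsq
      _ < (1 / (16 * L ^ 3)) * S * (16 * L^2) :=
          mul_lt_mul_of_pos_right hp2' (by positivity)
      _ = S / L := hfin
  exact lt_irrefl _ haS

/-- Time slice of a computation–clock vector. -/
private def wsl (w : Fin N × Fin (T+1) → ℂ) (t : Fin (T+1)) : Fin N → ℂ := fun i => w (i, t)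

private lemma kron_quadform (M : Matrix (Fin N) (Fin N) ℂ) (s t : Fin (T+1))
    (w : Fin N × Fin (T+1) → ℂ) :
    star w ⬝ᵥ (M ⊗ₖ Eij s t).mulVec w = star (wsl w s) ⬝ᵥ M.mulVec (wsl w t) := by
  simp only [dotProduct, Matrix.mulVec, Matrix.kroneckerMap_apply, Eij,
    Matrix.single, Pi.star_apply, wsl, Matrix.of_apply, Fintype.sum_prod_type,
    dotProduct, mul_ite, ite_mul, mul_one, mul_zero, zero_mul, one_mul, ite_and]
  rw [Finset.sum_comm]
  simp [Finset.sum_ite_eq, Finset.mul_sum]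

private lemma adj_move (A : Matrix (Fin N) (Fin N) ℂ) (x y : Fin N → ℂ) :
    star x ⬝ᵥ Aᴴ.mulVec y = star (A.mulVec x) ⬝ᵥ y := by
  rw [Matrix.star_mulVec, Matrix.dotProduct_mulVec]

private lemma unit_dot (A : Matrix (Fin N) (Fin N) ℂ) (hA : Aᴴ * A = 1) (x : Fin N → ℂ) :
    star (A.mulVec x) ⬝ᵥ (A.mulVec x) = star x ⬝ᵥ x := by
  rw [← adj_move, Matrix.mulVec_mulVec, hA, Matrix.one_mulVec]

private lemma selfdot_eq (x : Fin N → ℂ) :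
    star x ⬝ᵥ x = ((∑ i, ‖x i‖^2 : ℝ) : ℂ) := by
  rw [dotProduct]
  push_cast
  congr 1
  ext i
  rw [Pi.star_apply, mul_comm, Complex.star_def, Complex.mul_conj']

private lemma selfdot_re (x : Fin N → ℂ) :
    (star x ⬝ᵥ x).re = ∑ i, ‖x i‖^2 := by
  rw [selfdot_eq]; exact Complex.ofReal_re _

/-- `prodU U s` is unitary for every `s`. -/
private lemma prodU_unit (U : Fin T → Matrix (Fin N) (Fin N) ℂ)
    (hU : ∀ t, (U t)ᴴ * U t = 1 ∧ U t * (U t)ᴴ = 1) (s : ℕ) :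
    (prodU U s)ᴴ * prodU U s = 1 ∧ prodU U s * (prodU U s)ᴴ = 1 := by
  induction s with
  | zero => simp [prodU]
  | succ n ih =>
    by_cases h : n < T
    · rw [prodU, dif_pos h, Matrix.conjTranspose_mul]
      constructor
      · calc (prodU U n)ᴴ * (U ⟨n, h⟩)ᴴ * (U ⟨n, h⟩ * prodU U n)
            = (prodU U n)ᴴ * ((U ⟨n, h⟩)ᴴ * U ⟨n, h⟩) * prodU U n := by
              simp only [Matrix.mul_assoc]
          _ = 1 := by rw [(hU _).1, Matrix.mul_one, ih.1]
      · calc U ⟨n, h⟩ * prodU U n * ((prodU U n)ᴴ * (U ⟨n, h⟩)ᴴ)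
            = U ⟨n, h⟩ * (prodU U n * (prodU U n)ᴴ) * (U ⟨n, h⟩)ᴴ := by
              simp only [Matrix.mul_assoc]
          _ = 1 := by rw [ih.2, Matrix.mul_one, (hU _).2]
    · rw [prodU, dif_neg h, Matrix.one_mul]
      exact ih

/-- The canonical map to `EuclideanSpace`. -/
private noncomputable def toE (x : Fin N → ℂ) : EuclideanSpace ℂ (Fin N) :=
  (WithLp.equiv 2 (Fin N → ℂ)).symm x

private lemma toE_sub (x y : Fin N → ℂ) : toE (x - y) = toE x - toE y := rfl

private lemma toE_add (x y : Fin N → ℂ) : toE (x + y) = toE x + toE y := rfl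

private lemma normE_sq (x : Fin N → ℂ) : ‖toE x‖^2 = ∑ i, ‖x i‖^2 := by
  rw [EuclideanSpace.norm_eq]
  rw [Real.sq_sqrt (Finset.sum_nonneg fun _ _ => sq_nonneg _)]
  rfl

private lemma normE_sq_dot (x : Fin N → ℂ) : ‖toE x‖^2 = (star x ⬝ᵥ x).re := by
  rw [normE_sq, selfdot_re]

private lemma normE_eq_of_dot {x y : Fin N → ℂ} (h : star x ⬝ᵥ x = star y ⬝ᵥ y) :
    ‖toE x‖ = ‖toE y‖ := by
  have h2 : ‖toE x‖^2 = ‖toE y‖^2 := by rw [normE_sq_dot, normE_sq_dot, h]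
  calc ‖toE x‖ = Real.sqrt (‖toE x‖^2) := (Real.sqrt_sq (norm_nonneg _)).symm
    _ = Real.sqrt (‖toE y‖^2) := by rw [h2]
    _ = ‖toE y‖ := Real.sqrt_sq (norm_nonneg _)

private lemma normE_unit (A : Matrix (Fin N) (Fin N) ℂ) (hA : Aᴴ * A = 1) (x : Fin N → ℂ) :
    ‖toE (A.mulVec x)‖ = ‖toE x‖ :=
  normE_eq_of_dot (unit_dot A hA x)

/-- An orthogonal projection is a contraction. -/
private lemma normE_proj_le (Q : Matrix (Fin N) (Fin N) ℂ)
    (hQ : Qᴴ = Q ∧ Q * Q = Q) (x : Fin N → ℂ) :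
    ‖toE (Q.mulVec x)‖ ≤ ‖toE x‖ := by
  have hdot : star (Q.mulVec x) ⬝ᵥ (Q.mulVec x) = star x ⬝ᵥ Q.mulVec x := by
    rw [← adj_move Q x (Q.mulVec x), Matrix.mulVec_mulVec, hQ.1, hQ.2]
  have hinner : (inner ℂ (toE x) (toE (Q.mulVec x)) : ℂ) = star x ⬝ᵥ Q.mulVec x := by
    rw [EuclideanSpace.inner_eq_star_dotProduct]
    exact dotProduct_comm _ _
  have hsq : ‖toE (Q.mulVec x)‖^2 ≤ ‖toE x‖ * ‖toE (Q.mulVec x)‖ := by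
    rw [normE_sq_dot, hdot, ← hinner]
    calc (inner ℂ (toE x) (toE (Q.mulVec x)) : ℂ).re
        ≤ ‖(inner ℂ (toE x) (toE (Q.mulVec x)) : ℂ)‖ := Complex.re_le_norm _
      _ ≤ ‖toE x‖ * ‖toE (Q.mulVec x)‖ := norm_inner_le_norm _ _
  rcases eq_or_lt_of_le (norm_nonneg (toE (Q.mulVec x))) with h0 | h0
  · rw [← h0]; exact norm_nonneg _
  · have := (mul_le_mul_iff_of_pos_right h0).mp (by nlinarith : ‖toE (Q.mulVec x)‖ * ‖toE (Q.mulVec x)‖ ≤ ‖toE x‖ * ‖toE (Q.mulVec x)‖)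
    exact this

private lemma sum_mulVec' {n m κ : Type*} [Fintype n] [Fintype κ]
    (M : κ → Matrix m n ℂ) (x : n → ℂ) :
    (∑ t, M t) *ᵥ x = ∑ t, M t *ᵥ x := by
  ext i
  simp only [Matrix.mulVec, dotProduct, Finset.sum_apply, Matrix.sum_apply,
    Finset.sum_mul]
  rw [Finset.sum_comm]

private lemma dot_sum' {n κ : Type*} [Fintype n] [Fintype κ] (x : n → ℂ) (y : κ → n → ℂ) :
    x ⬝ᵥ (∑ t, y t) = ∑ t, x ⬝ᵥ y t := by
  simp only [dotProduct, Finset.sum_apply, Finset.mul_sum]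
  rw [Finset.sum_comm]

private lemma hpropT_quad (U : Fin T → Matrix (Fin N) (Fin N) ℂ)
    (hU : ∀ t, (U t)ᴴ * U t = 1 ∧ U t * (U t)ᴴ = 1)
    (t : Fin T) (w : Fin N × Fin (T+1) → ℂ) :
    star w ⬝ᵥ (HpropT U t).mulVec w =
      (1/2 : ℂ) * (star (wsl w t.succ - (U t).mulVec (wsl w t.castSucc)) ⬝ᵥ
        (wsl w t.succ - (U t).mulVec (wsl w t.castSucc))) := by
  rw [HpropT, Matrix.smul_mulVec, dotProduct_smul, smul_eq_mul]
  congr 1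
  rw [Matrix.sub_mulVec, Matrix.sub_mulVec, Matrix.kronecker_add, Matrix.add_mulVec,
    dotProduct_sub, dotProduct_sub, dotProduct_add,
    kron_quadform, kron_quadform, kron_quadform, kron_quadform,
    Matrix.one_mulVec, Matrix.one_mulVec, adj_move (U t)]
  have hUc := unit_dot (U t) (hU t).1 (wsl w t.castSucc)
  simp only [star_sub, sub_dotProduct, dotProduct_sub]
  rw [hUc]
  ring

private noncomputable def matE (A : Matrix (Fin N) (Fin N) ℂ) :
    EuclideanSpace ℂ (Fin N) →+ EuclideanSpace ℂ (Fin N) where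
  toFun x := toE (A.mulVec (WithLp.equiv 2 (Fin N → ℂ) x))
  map_zero' := by
    simp only [toE]
    simp [Matrix.mulVec_zero]
  map_add' x y := by
    simp only [toE]
    simp [Matrix.mulVec_add]

private lemma matE_toE (A : Matrix (Fin N) (Fin N) ℂ) (x : Fin N → ℂ) :
    matE A (toE x) = toE (A.mulVec x) := by
  simp [matE, toE]

private lemma norm_matE (A : Matrix (Fin N) (Fin N) ℂ) (x : EuclideanSpace ℂ (Fin N)) :
    ‖matE A x‖ = ‖toE (A.mulVec (WithLp.equiv 2 (Fin N → ℂ) x))‖ := rfl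

private lemma toE_equiv (x : EuclideanSpace ℂ (Fin N)) :
    toE (WithLp.equiv 2 (Fin N → ℂ) x) = x := by
  simp [toE]

private lemma toE_inj {x y : Fin N → ℂ} (h : toE x = toE y) : x = y :=
  (WithLp.equiv 2 (Fin N → ℂ)).symm.injective h

private lemma sqle' {x c : ℝ} (hx : 0 ≤ x) (hc : 0 ≤ c) (h : x^2 ≤ c^2) : x ≤ c := by
  nlinarith

private lemma rej_transfer (U : Fin T → Matrix (Fin N) (Fin N) ℂ)
    (hU : ∀ t, (U t)ᴴ * U t = 1 ∧ U t * (U t)ᴴ = 1)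
    (J Q : Matrix (Fin N) (Fin N) ℂ)
    (hQ : Qᴴ = Q ∧ Q * Q = Q)
    (ε : ℝ) (hε0 : 0 ≤ ε) (hε1 : ε ≤ 1 / 100)
    (hrej : ∀ v : Fin N → ℂ, (∑ i, ‖v i‖ ^ 2 = 1) → J.mulVec v = 0 →
      ∑ i, ‖((1 : Matrix (Fin N) (Fin N) ℂ) - Q).mulVec ((prodU U T).mulVec v) i‖ ^ 2 ≤ ε)
    (y : Fin N → ℂ) (hy : J.mulVec y = 0) :
    (9/10 : ℝ) * ‖toE y‖ ≤ ‖toE ((Q * prodU U T).mulVec y)‖ := by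
  by_cases hy0 : y = 0
  · subst hy0
    rw [Matrix.mulVec_zero]
    simp [toE]
  obtain ⟨n, hn⟩ : ∃ n : ℝ, n = ‖toE y‖ := ⟨_, rfl⟩
  have hn0 : 0 < n := by
    rw [hn]
    apply norm_pos_iff.mpr
    intro h
    exact hy0 (toE_inj (by rw [h]; simp [toE]))
  have hnC : ((n:ℂ)) ≠ 0 := by exact_mod_cast (ne_of_gt hn0)
  have hnsq : ∑ i, ‖y i‖^2 = n^2 := by rw [hn, normE_sq]
  obtain ⟨v, hv⟩ : ∃ v : Fin N → ℂ, v = ((n:ℂ))⁻¹ • y := ⟨_, rfl⟩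
  have hnormInv : ‖((n:ℂ))⁻¹‖ = n⁻¹ := by
    rw [norm_inv, Complex.norm_real, Real.norm_eq_abs, abs_of_pos hn0]
  have hv1 : ∑ i, ‖v i‖^2 = 1 := by
    rw [hv]
    simp only [Pi.smul_apply, smul_eq_mul, norm_mul, mul_pow, ← Finset.mul_sum]
    rw [hnsq, hnormInv]
    field_simp
  have hvJ : J.mulVec v = 0 := by rw [hv, Matrix.mulVec_smul, hy, smul_zero]
  have hmain := hrej v hv1 hvJ
  have hyv : y = (n:ℂ) • v := by rw [hv, smul_inv_smul₀ hnC]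
  have hscale : ((1 : Matrix (Fin N) (Fin N) ℂ) - Q).mulVec ((prodU U T).mulVec y)
      = (n:ℂ) • (((1 : Matrix (Fin N) (Fin N) ℂ) - Q).mulVec ((prodU U T).mulVec v)) := by
    rw [hyv, Matrix.mulVec_smul, Matrix.mulVec_smul]
  have hbad : ‖toE (((1 : Matrix (Fin N) (Fin N) ℂ) - Q).mulVec ((prodU U T).mulVec y))‖
      ≤ n * (1/10) := by
    refine sqle' (norm_nonneg _) (by positivity) ?_
    rw [normE_sq, hscale]
    simp only [Pi.smul_apply, smul_eq_mul, norm_mul, mul_pow, ← Finset.mul_sum]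
    have hnn : ‖(n:ℂ)‖^2 = n^2 := by
      rw [Complex.norm_real, Real.norm_eq_abs, sq_abs]
    rw [hnn]
    nlinarith [mul_le_mul_of_nonneg_left hmain (sq_nonneg n),
      mul_le_mul_of_nonneg_left hε1 (sq_nonneg n)]
  have hsplit : toE ((prodU U T).mulVec y)
      = toE ((Q * prodU U T).mulVec y)
        + toE (((1 : Matrix (Fin N) (Fin N) ℂ) - Q).mulVec ((prodU U T).mulVec y)) := by
    have hvec : (Q * prodU U T) *ᵥ y
        + ((1 : Matrix (Fin N) (Fin N) ℂ) - Q) *ᵥ (prodU U T *ᵥ y) = prodU U T *ᵥ y := by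
      rw [Matrix.sub_mulVec, Matrix.one_mulVec, ← Matrix.mulVec_mulVec]
      abel
    rw [← toE_add, hvec]
  have hPi : ‖toE ((prodU U T).mulVec y)‖ = n := by
    rw [normE_unit _ (prodU_unit U hU T).1, hn]
  have htri := norm_add_le (toE ((Q * prodU U T).mulVec y))
    (toE (((1 : Matrix (Fin N) (Fin N) ℂ) - Q).mulVec ((prodU U T).mulVec y)))
  rw [← hsplit, hPi] at htri
  rw [← hn]
  linarith

end Aux

/-- Soundness: if `J, Q` are orthogonal projections and every unit vector `v` with
`J v = 0` is rejected except with probability `ε ≤ 1/100`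
(i.e. `‖(1 - Q)(U_T ⋯ U_1 v)‖² ≤ ε`), then every eigenvalue of
`H = J ⊗ E_{0,0} + Q ⊗ E_{T,T} + H_prop` is at least `1/(16(T+1)³)`:
`⟪w, H w⟫ ≥ (1/(16(T+1)³)) ‖w‖²` for every `w`. -/
theorem stmt_12 {N T : ℕ} (hN : 1 ≤ N) (hT : 1 ≤ T)
    (U : Fin T → Matrix (Fin N) (Fin N) ℂ)
    (hU : ∀ t, (U t)ᴴ * U t = 1 ∧ U t * (U t)ᴴ = 1)
    (J Q : Matrix (Fin N) (Fin N) ℂ)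
    (hJ : Jᴴ = J ∧ J * J = J) (hQ : Qᴴ = Q ∧ Q * Q = Q)
    (ε : ℝ) (hε0 : 0 ≤ ε) (hε1 : ε ≤ 1 / 100)
    (hrej : ∀ v : Fin N → ℂ, (∑ i, ‖v i‖ ^ 2 = 1) → J.mulVec v = 0 →
      ∑ i, ‖((1 : Matrix (Fin N) (Fin N) ℂ) - Q).mulVec ((prodU U T).mulVec v) i‖ ^ 2 ≤ ε)
    (H : Matrix (Fin N × Fin (T + 1)) (Fin N × Fin (T + 1)) ℂ)
    (hH : H = J ⊗ₖ Eij 0 0 + Q ⊗ₖ Eij (Fin.last T) (Fin.last T) + Hprop U)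
    (w : Fin N × Fin (T + 1) → ℂ) :
    (1 / (16 * ((T : ℝ) + 1) ^ 3)) * ∑ p, ‖w p‖ ^ 2 ≤ (star w ⬝ᵥ H.mulVec w).re := by
  have hPiU := prodU_unit U hU
  -- quadratic-form decomposition of the two penalty terms
  have hJd : star w ⬝ᵥ (J ⊗ₖ Eij 0 0).mulVec w
      = star (J.mulVec (wsl w 0)) ⬝ᵥ (J.mulVec (wsl w 0)) := by
    rw [kron_quadform]
    conv_lhs => rw [show J = Jᴴ * J by rw [hJ.1, hJ.2]]
    rw [← Matrix.mulVec_mulVec, adj_move]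
  have hQd : star w ⬝ᵥ (Q ⊗ₖ Eij (Fin.last T) (Fin.last T)).mulVec w
      = star (Q.mulVec (wsl w (Fin.last T))) ⬝ᵥ (Q.mulVec (wsl w (Fin.last T))) := by
    rw [kron_quadform]
    conv_lhs => rw [show Q = Qᴴ * Q by rw [hQ.1, hQ.2]]
    rw [← Matrix.mulVec_mulVec, adj_move]
  have hHd : (star w ⬝ᵥ H.mulVec w).re
      = ‖toE (J.mulVec (wsl w 0))‖^2 + ‖toE (Q.mulVec (wsl w (Fin.last T)))‖^2
        + (1/2) * ∑ t : Fin T,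
            ‖toE (wsl w t.succ - (U t).mulVec (wsl w t.castSucc))‖^2 := by
    rw [hH, Matrix.add_mulVec, Matrix.add_mulVec, dotProduct_add,
      dotProduct_add, Hprop, sum_mulVec', dot_sum', hJd, hQd]
    simp only [Complex.add_re]
    rw [normE_sq_dot, normE_sq_dot]
    congr 1
    rw [Complex.re_sum, Finset.mul_sum]
    apply Finset.sum_congr rfl
    intro t _
    rw [hpropT_quad U hU t w, selfdot_eq, normE_sq]
    rw [show ((1/2 : ℂ) * ((∑ i, ‖(wsl w t.succ - (U t).mulVec (wsl w t.castSucc)) i‖^2 : ℝ) : ℂ))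
        = (((1/2) * ∑ i, ‖(wsl w t.succ - (U t).mulVec (wsl w t.castSucc)) i‖^2 : ℝ) : ℂ) by
      push_cast; ring]
    rw [Complex.ofReal_re]
  -- hypotheses for the abstract lemma
  have hPP : ∀ x, matE J (matE J x) = matE J x := by
    intro x
    have h1 : matE J x = toE (J.mulVec (WithLp.equiv 2 (Fin N → ℂ) x)) := rfl
    rw [h1, matE_toE, Matrix.mulVec_mulVec, hJ.2]
  have hRc : ∀ x, ‖matE (Q * prodU U T) x‖ ≤ ‖x‖ := by
    intro x
    rw [norm_matE, ← Matrix.mulVec_mulVec]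
    calc ‖toE (Q.mulVec ((prodU U T).mulVec (WithLp.equiv 2 (Fin N → ℂ) x)))‖
        ≤ ‖toE ((prodU U T).mulVec (WithLp.equiv 2 (Fin N → ℂ) x))‖ := normE_proj_le Q hQ _
      _ = ‖toE (WithLp.equiv 2 (Fin N → ℂ) x)‖ := normE_unit _ (hPiU T).1 _
      _ = ‖x‖ := by rw [toE_equiv]
  have hrej' : ∀ x, matE J x = 0 → (9/10:ℝ) * ‖x‖ ≤ ‖matE (Q * prodU U T) x‖ := by
    intro x hx
    have hx0 : J.mulVec (WithLp.equiv 2 (Fin N → ℂ) x) = 0 := by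
      apply toE_inj
      have h1 : toE (J.mulVec (WithLp.equiv 2 (Fin N → ℂ) x)) = matE J x := rfl
      rw [h1, hx]
      simp [toE]
    have h2 := rej_transfer U hU J Q hQ ε hε0 hε1 hrej _ hx0
    rw [toE_equiv] at h2
    rw [norm_matE]
    exact h2
  -- rotated-frame slices
  obtain ⟨v, hvdef⟩ : ∃ v : Fin (T+1) → EuclideanSpace ℂ (Fin N),
      v = fun t : Fin (T+1) => toE ((prodU U (t : ℕ))ᴴ.mulVec (wsl w t)) := ⟨_, rfl⟩
  have hv0 : v 0 = toE (wsl w 0) := by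
    rw [hvdef]
    show toE ((prodU U ((0 : Fin (T+1)) : ℕ))ᴴ.mulVec (wsl w 0)) = toE (wsl w 0)
    have h0 : ((0 : Fin (T+1)) : ℕ) = 0 := rfl
    rw [h0]
    show toE ((1 : Matrix (Fin N) (Fin N) ℂ)ᴴ.mulVec (wsl w 0)) = toE (wsl w 0)
    rw [Matrix.conjTranspose_one, Matrix.one_mulVec]
  have hRvlast : matE (Q * prodU U T) (v (Fin.last T))
      = toE (Q.mulVec (wsl w (Fin.last T))) := by
    rw [hvdef]
    show matE (Q * prodU U T)
      (toE ((prodU U ((Fin.last T : Fin (T+1)) : ℕ))ᴴ.mulVec (wsl w (Fin.last T)))) = _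
    have hl : ((Fin.last T : Fin (T+1)) : ℕ) = T := rfl
    rw [hl, matE_toE, Matrix.mulVec_mulVec, Matrix.mul_assoc, (hPiU T).2, Matrix.mul_one]
  have hdiff : ∀ t : Fin T, ‖v t.succ - v t.castSucc‖
      = ‖toE (wsl w t.succ - (U t).mulVec (wsl w t.castSucc))‖ := by
    intro t
    rw [hvdef]
    simp only
    have hsuccval : ((t.succ : Fin (T+1)) : ℕ) = (t : ℕ) + 1 := rfl
    have hcastval : ((t.castSucc : Fin (T+1)) : ℕ) = (t : ℕ) := rfl
    rw [hsuccval, hcastval]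
    have hstep : prodU U ((t : ℕ) + 1) = U t * prodU U (t : ℕ) := by
      rw [prodU, dif_pos t.isLt, Fin.eta]
    rw [hstep, ← toE_sub, Matrix.conjTranspose_mul]
    have e1 : ((prodU U (t : ℕ))ᴴ * (U t)ᴴ).mulVec (wsl w t.succ)
        = (prodU U (t : ℕ))ᴴ.mulVec ((U t)ᴴ.mulVec (wsl w t.succ)) :=
      (Matrix.mulVec_mulVec _ _ _).symm
    rw [e1, ← Matrix.mulVec_sub]
    rw [normE_unit ((prodU U (t : ℕ))ᴴ)
      (by rw [Matrix.conjTranspose_conjTranspose]; exact (hPiU (t : ℕ)).2)]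
    rw [← normE_unit (U t) (hU t).1 ((U t)ᴴ.mulVec (wsl w t.succ) - wsl w t.castSucc)]
    congr 2
    rw [Matrix.mulVec_sub, Matrix.mulVec_mulVec, (hU t).2, Matrix.one_mulVec]
  have hvnorm : ∀ t : Fin (T+1), ‖v t‖^2 = ∑ i, ‖w (i, t)‖^2 := by
    intro t
    rw [hvdef]
    simp only
    rw [normE_unit ((prodU U (t : ℕ))ᴴ)
      (by rw [Matrix.conjTranspose_conjTranspose]; exact (hPiU (t : ℕ)).2), normE_sq]
    rfl
  have hsump : ∑ p : Fin N × Fin (T+1), ‖w p‖^2 = ∑ t, ‖v t‖^2 := by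
    rw [Fintype.sum_prod_type, Finset.sum_comm]
    exact Finset.sum_congr rfl fun t _ => (hvnorm t).symm
  have key := kitaev_key T hT (matE J) (matE (Q * prodU U T)) hPP hRc hrej' v
  rw [hsump, hHd]
  have e1 : ‖matE J (v 0)‖^2 = ‖toE (J.mulVec (wsl w 0))‖^2 := by rw [hv0, matE_toE]
  have e2 : ‖matE (Q * prodU U T) (v (Fin.last T))‖^2
      = ‖toE (Q.mulVec (wsl w (Fin.last T)))‖^2 := by rw [hRvlast]
  have e3 : ∑ t : Fin T, ‖v t.succ - v t.castSucc‖^2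
      = ∑ t : Fin T, ‖toE (wsl w t.succ - (U t).mulVec (wsl w t.castSucc))‖^2 :=
    Finset.sum_congr rfl fun t _ => by rw [hdiff t]
  rw [e1, e2, e3] at key
  exact key
end
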